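/- Let D be a strongly connected balanced bipartite digraph of order 2a ≥ 8 with partite sets X and Y. If max{d(x), d(y)} ≥ 2a − 2 for every dominating pair of vertices {x, y}, then D contains a cycle factor (a collection of vertex-disjoint directed cycles covering all vertices of D). -/

import Mathlib

/-!
A cycle factor is a permutation `e` with every `v → e v` an arc (a bipartite digraph has no
loops), so by Hall's theorem it exists as soon as every vertex set `S` has at least `|S|`
out-neighbours; in a bipartite digraph it suffices to check this for `S` inside one part.
If `S ⊆ X` violates it, two vertices of `S` share an out-neighbour, so some `x ∈ S` has
`d(x) ≥ 2a - 2`. Since `d(x) ≤ |N⁺(S)| + a`, and `|S| < a` because in a strongly connected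
digraph a vertex of `Y \ N⁺(S)` has an in-neighbour in `X \ S`, this forces `|S| = a - 1`,
`|N⁺(S)| = a - 2` and `N⁻(x) = Y`. The two vertices of `Y \ N⁺(S)` then form a dominating
pair (both dominate `x`), yet their in-neighbours all lie in the single vertex of `X \ S`,
so each has degree at most `a + 1 < 2a - 2`.
-/

open Finset

variable {V : Type*}

/-- Total degree (out-degree plus in-degree) of `x` in the digraph with arc relation `A`. -/
noncomputable def deg (A : V → V → Prop) (x : V) : ℕ :=
  Set.ncard {y | A x y} + Set.ncard {y | A y x}

/-- The digraph with arc relation `A` is strongly connected. -/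
def StrongConn (A : V → V → Prop) : Prop :=
  ∀ u v : V, Relation.ReflTransGen A u v

/-- `{x, y}` is a dominating pair: distinct vertices with a common out-neighbour. -/
def DomPair (A : V → V → Prop) (x y : V) : Prop :=
  x ≠ y ∧ ∃ z, A x z ∧ A y z

/-- `X, Y` is a bipartition of the digraph `A`: the two parts partition the vertex
set and every arc joins the two parts. -/
def IsBipartition (A : V → V → Prop) (X Y : Set V) : Prop :=
  Disjoint X Y ∧ X ∪ Y = Set.univ ∧
    ∀ u v, A u v → (u ∈ X ∧ v ∈ Y) ∨ (u ∈ Y ∧ v ∈ X)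

/-- A cycle factor: a spanning collection of pairwise vertex-disjoint directed cycles,
encoded as a permutation `e` such that every `v → e v` is an arc and no vertex is fixed. -/
def CycleFactor (A : V → V → Prop) : Prop :=
  ∃ e : Equiv.Perm V, ∀ v, A v (e v) ∧ e v ≠ v

def outNeighbors (A : V → V → Prop) (S : Set V) : Set V :=
  {w | ∃ v ∈ S, A v w}

variable {A : V → V → Prop}

theorem outNeighbors_union (S T : Set V) :
    outNeighbors A (S ∪ T) = outNeighbors A S ∪ outNeighbors A T := by
  ext w
  simp only [outNeighbors, Set.mem_union, Set.mem_ofPred_eq, or_and_right, exists_or]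

theorem cycleFactor_of_forall_ncard_le_ncard_outNeighbors [Finite V] (hirrefl : ∀ v, ¬ A v v)
    (hall : ∀ S : Set V, S.ncard ≤ (outNeighbors A S).ncard) : CycleFactor A := by
  classical
  have := Fintype.ofFinite V
  obtain ⟨f, hinj, hf⟩ := (Fintype.all_card_le_filter_rel_iff_exists_injective A).mp fun S => by
    simpa [← Set.ncard_coe_finset, outNeighbors] using hall S
  refine ⟨Equiv.ofBijective f hinj.bijective_of_finite, fun v => ⟨hf v, fun h => ?_⟩⟩
  have hfix : f v = v := h
  exact hirrefl v (by simpa only [hfix] using hf v)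

theorem deg_le_ncard_add_ncard [Finite V] {x : V} {P Q : Set V} (hout : {y | A x y} ⊆ P)
    (hin : {y | A y x} ⊆ Q) : deg A x ≤ P.ncard + Q.ncard :=
  Nat.add_le_add (Set.ncard_le_ncard hout) (Set.ncard_le_ncard hin)

theorem exists_domPair_of_ncard_outNeighbors_lt [Finite V] {S : Set V} (hout : ∀ v, ∃ w, A v w)
    (h : (outNeighbors A S).ncard < S.ncard) : ∃ x ∈ S, ∃ y ∈ S, DomPair A x y := by
  choose f hf using hout
  obtain ⟨x, hx, y, hy, hne, hxy⟩ :=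
    Set.exists_ne_map_eq_of_ncard_lt_of_maps_to h (f := f) fun v hv => ⟨v, hv, hf v⟩
  exact ⟨x, hx, y, hy, hne, f x, hf x, hxy ▸ hf y⟩

namespace StrongConn

variable [Nontrivial V]

theorem exists_adj (hA : StrongConn A) (v : V) : ∃ w, A v w := by
  obtain ⟨u, hu⟩ := exists_ne v
  rcases (hA v u).cases_head with h | ⟨w, hw, -⟩
  exacts [absurd h.symm hu, ⟨w, hw⟩]

theorem exists_adj_to (hA : StrongConn A) (v : V) : ∃ u, A u v := by
  obtain ⟨u, hu⟩ := exists_ne v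
  rcases (hA u v).cases_tail with h | ⟨w, -, hw⟩
  exacts [absurd h.symm hu, ⟨w, hw⟩]

end StrongConn

namespace IsBipartition

variable {X Y : Set V}

theorem symm (hbip : IsBipartition A X Y) : IsBipartition A Y X :=
  ⟨hbip.1.symm, Set.union_comm X Y ▸ hbip.2.1, fun u v h => (hbip.2.2 u v h).symm⟩

theorem irrefl (hbip : IsBipartition A X Y) (v : V) : ¬ A v v := fun h => by
  rcases hbip.2.2 v v h with ⟨hX, hY⟩ | ⟨hY, hX⟩ <;> exact hbip.1.notMem_of_mem_left hX hY

theorem mem_right_of_adj (hbip : IsBipartition A X Y) {u v : V} (hu : u ∈ X) (h : A u v) :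
    v ∈ Y := by
  rcases hbip.2.2 u v h with ⟨-, hv⟩ | ⟨hu', -⟩
  exacts [hv, absurd hu' (hbip.1.notMem_of_mem_left hu)]

theorem mem_left_of_adj (hbip : IsBipartition A X Y) {u v : V} (hv : v ∈ Y) (h : A u v) :
    u ∈ X := by
  rcases hbip.2.2 u v h with ⟨hu, -⟩ | ⟨-, hv'⟩
  exacts [hu, absurd hv (hbip.1.notMem_of_mem_left hv')]

theorem outNeighbors_subset (hbip : IsBipartition A X Y) {S : Set V} (hS : S ⊆ X) :
    outNeighbors A S ⊆ Y :=
  fun _ ⟨_, hv, hvw⟩ => hbip.mem_right_of_adj (hS hv) hvw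

theorem nontrivial (hbip : IsBipartition A X Y) (hX : X.Nonempty) (hY : Y.Nonempty) :
    Nontrivial V :=
  let ⟨x, hx⟩ := hX
  let ⟨y, hy⟩ := hY
  ⟨x, y, fun h => hbip.1.notMem_of_mem_left hx (h ▸ hy)⟩

theorem setOf_adj_subset_sdiff (hbip : IsBipartition A X Y) {S : Set V} {t : V}
    (ht : t ∈ Y \ outNeighbors A S) : {u | A u t} ⊆ X \ S :=
  fun u hut => ⟨hbip.mem_left_of_adj ht.1 hut, fun hu => ht.2 ⟨u, hu, hut⟩⟩

theorem ncard_lt_of_ncard_outNeighbors_lt [Finite V] (hbip : IsBipartition A X Y)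
    (hin : ∀ v, ∃ u, A u v) {S : Set V} (hS : S ⊆ X) (h : (outNeighbors A S).ncard < Y.ncard) :
    S.ncard < X.ncard := by
  obtain ⟨t, htY, htS⟩ := Set.exists_mem_notMem_of_ncard_lt_ncard h
  obtain ⟨u, hu⟩ := hin t
  exact Set.ncard_lt_ncard <| (Set.ssubset_iff_of_subset hS).mpr
    ⟨u, hbip.setOf_adj_subset_sdiff ⟨htY, htS⟩ hu⟩

theorem forall_ncard_le_ncard_outNeighbors [Finite V] (hbip : IsBipartition A X Y)
    (hallX : ∀ S ⊆ X, S.ncard ≤ (outNeighbors A S).ncard)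
    (hallY : ∀ S ⊆ Y, S.ncard ≤ (outNeighbors A S).ncard) (S : Set V) :
    S.ncard ≤ (outNeighbors A S).ncard := by
  have hsplit : S = (S ∩ X) ∪ (S ∩ Y) := by
    rw [← Set.inter_union_distrib_left, hbip.2.1, Set.inter_univ]
  have hdisj : Disjoint (S ∩ X) (S ∩ Y) :=
    hbip.1.mono Set.inter_subset_right Set.inter_subset_right
  have hdisj' : Disjoint (outNeighbors A (S ∩ X)) (outNeighbors A (S ∩ Y)) :=
    hbip.1.symm.mono (hbip.outNeighbors_subset Set.inter_subset_right)
      (hbip.symm.outNeighbors_subset Set.inter_subset_right)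
  calc S.ncard = (S ∩ X).ncard + (S ∩ Y).ncard := by
        rw [← Set.ncard_union_eq hdisj, ← hsplit]
    _ ≤ (outNeighbors A (S ∩ X)).ncard + (outNeighbors A (S ∩ Y)).ncard :=
        Nat.add_le_add (hallX _ Set.inter_subset_right) (hallY _ Set.inter_subset_right)
    _ = (outNeighbors A S).ncard := by
        rw [← Set.ncard_union_eq hdisj', ← outNeighbors_union, ← hsplit]

theorem ncard_le_ncard_outNeighbors [Finite V] (hbip : IsBipartition A X Y) {a : ℕ} (ha : 4 ≤ a)
    (hX : X.ncard = a) (hY : Y.ncard = a) (hstrong : StrongConn A)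
    (hdeg : ∀ x y : V, DomPair A x y → 2 * a - 2 ≤ max (deg A x) (deg A y))
    {S : Set V} (hS : S ⊆ X) : S.ncard ≤ (outNeighbors A S).ncard := by
  have := hbip.nontrivial (Set.nonempty_of_ncard_ne_zero (by omega))
    (Set.nonempty_of_ncard_ne_zero (by omega))
  by_contra! hlt
  set R := outNeighbors A S
  have hRY : R ⊆ Y := hbip.outNeighbors_subset hS
  obtain ⟨x, hxS, hx⟩ : ∃ x ∈ S, 2 * a - 2 ≤ deg A x := by
    obtain ⟨x, hx, y, hy, hxy⟩ := exists_domPair_of_ncard_outNeighbors_lt hstrong.exists_adj hlt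
    rcases le_max_iff.mp (hdeg x y hxy) with h | h
    exacts [⟨x, hx, h⟩, ⟨y, hy, h⟩]
  have hout : {y | A x y} ⊆ R := fun y hy => ⟨x, hxS, hy⟩
  have hin : {y | A y x} ⊆ Y := fun y hy => hbip.symm.mem_left_of_adj (hS hxS) hy
  have hdegx : 2 * a - 2 ≤ {y | A x y}.ncard + {y | A y x}.ncard := hx
  have houtx := Set.ncard_le_ncard hout
  have hinx := Set.ncard_le_ncard hin
  have hSX := Set.ncard_le_ncard hS
  have hSa := hbip.ncard_lt_of_ncard_outNeighbors_lt hstrong.exists_adj_to hS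
    (show R.ncard < Y.ncard by omega)
  have hinxY : {y | A y x} = Y := Set.eq_of_subset_of_ncard_le hin (by omega)
  have hXS : (X \ S).ncard = 1 := by rw [Set.ncard_sdiff hS]; omega
  have hYR : (Y \ R).ncard = 2 := by rw [Set.ncard_sdiff hRY]; omega
  obtain ⟨t₁, t₂, hne, hYR⟩ := Set.ncard_eq_two.mp hYR
  have hsmall : ∀ t ∈ Y \ R, deg A t ≤ a + 1 := fun t ht => by
    have := deg_le_ncard_add_ncard (fun u hu => hbip.symm.mem_right_of_adj ht.1 hu)
      (hbip.setOf_adj_subset_sdiff ht)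
    omega
  have ht₁ : t₁ ∈ Y \ R := hYR ▸ Set.mem_insert _ _
  have ht₂ : t₂ ∈ Y \ R := hYR ▸ Set.mem_insert_of_mem _ rfl
  have hdom : ∀ t ∈ Y \ R, A t x := fun t ht => (hinxY.symm ▸ ht.1 : t ∈ {y | A y x})
  have hpair : DomPair A t₁ t₂ := ⟨hne, x, hdom t₁ ht₁, hdom t₂ ht₂⟩
  have := max_le (hsmall t₁ ht₁) (hsmall t₂ ht₂)
  have := hdeg t₁ t₂ hpair
  omega

end IsBipartition

/-- If `D` is a strongly connected balanced bipartite digraph of order `2a ≥ 8` and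
`max {d(x), d(y)} ≥ 2a − 2` for every dominating pair `{x, y}`, then `D` contains a
cycle factor. -/
theorem stmt3 [Fintype V] (A : V → V → Prop) (X Y : Set V) (a : ℕ) (ha : 4 ≤ a)
    (hX : X.ncard = a) (hY : Y.ncard = a) (hbip : IsBipartition A X Y)
    (hstrong : StrongConn A)
    (hdeg : ∀ x y : V, DomPair A x y → 2 * a - 2 ≤ max (deg A x) (deg A y)) :
    CycleFactor A :=
  cycleFactor_of_forall_ncard_le_ncard_outNeighbors hbip.irrefl <|
    hbip.forall_ncard_le_ncard_outNeighbors
      (fun _ hS => hbip.ncard_le_ncard_outNeighbors ha hX hY hstrong hdeg hS)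
      (fun _ hS => hbip.symm.ncard_le_ncard_outNeighbors ha hY hX hstrong hdeg hS)
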